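/- arXiv:2103.16857 — 7 statements merged into one kernel-verified Lean document; each statement's English description precedes it below -/
import Mathlib

section
/- Let A be a Boolean algebra and let S be a countable family of subsets of A. Then for any elements a, b ∈ A with a ≰ b, there exists a Q-filter F of A for S such that a ∈ F and b ∉ F. (Rasiowa–Sikorski lemma.) -/
variable {α : Type*}

/-- A filter of a Boolean algebra: a nonempty, upward-closed subset
closed under binary meets. -/
def IsGoodFilter [BooleanAlgebra α] (F : Set α) : Prop :=
  F.Nonempty ∧ (∀ x y : α, x ∈ F → x ≤ y → y ∈ F) ∧
    (∀ x y : α, x ∈ F → y ∈ F → x ⊓ y ∈ F)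

/-- A prime filter: a proper filter (⊥ ∉ F) such that x ⊔ y ∈ F implies
x ∈ F or y ∈ F. -/
def IsPrimeFilter [BooleanAlgebra α] (F : Set α) : Prop :=
  IsGoodFilter F ∧ (⊥ : α) ∉ F ∧ ∀ x y : α, x ⊔ y ∈ F → x ∈ F ∨ y ∈ F

/-- A Q-filter for a family `S` of subsets: a prime filter such that for every
`X ∈ S` whose infimum exists and with `X ⊆ F`, the infimum belongs to `F`. -/
def IsQFilter [BooleanAlgebra α] (S : Set (Set α)) (F : Set α) : Prop :=
  IsPrimeFilter F ∧ ∀ X ∈ S, ∀ m : α, IsGLB X m → X ⊆ F → m ∈ F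

/-- The set of all Q-filters for `S`. -/
abbrev QFilt [BooleanAlgebra α] (S : Set (Set α)) := {F : Set α // IsQFilter S F}

/-- The Stone-style map `f x = {F ∈ Q_S(A) | x ∈ F}`. -/
def fset [BooleanAlgebra α] (S : Set (Set α)) (x : α) : Set (QFilt S) :=
  {F | x ∈ F.1}

/-- The neighborhood map of the frame `J_S(A)`: the upward closure (under ⊆)
of the family `{f y | □y ∈ F}`. -/
def nbhd [BooleanAlgebra α] (box : α → α) (S : Set (Set α)) (F : QFilt S) :
    Set (Set (QFilt S)) :=
  {X | ∃ y : α, box y ∈ F.1 ∧ fset S y ⊆ X}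

/-- The neighborhood map of the frame `J̄_S(A)`: the family `{f y | □y ∈ F}`,
without taking upward closure. -/
def nbhdBar [BooleanAlgebra α] (box : α → α) (S : Set (Set α)) (F : QFilt S) :
    Set (Set (QFilt S)) :=
  {X | ∃ y : α, box y ∈ F.1 ∧ fset S y = X}

open Classical in
/-- Auxiliary decreasing sequence for Rasiowa–Sikorski. -/
noncomputable def rsSeq [BooleanAlgebra α] (f : ℕ → Set α) (b a : α) : ℕ → α
  | 0 => a
  | n + 1 =>
      let c := rsSeq f b a n
      if h : ∃ x ∈ f n, ¬ (c ⊓ bᶜ ≤ x) then c ⊓ (h.choose)ᶜ else c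

theorem rsSeq_succ_le [BooleanAlgebra α] (f : ℕ → Set α) (b a : α) (n : ℕ) :
    rsSeq f b a (n + 1) ≤ rsSeq f b a n := by
  rw [rsSeq]
  split
  · exact inf_le_left
  · exact le_rfl

theorem rsSeq_anti [BooleanAlgebra α] (f : ℕ → Set α) (b a : α) :
    Antitone (rsSeq f b a) :=
  antitone_nat_of_succ_le (rsSeq_succ_le f b a)

theorem rsSeq_ne_bot [BooleanAlgebra α] (f : ℕ → Set α) (b a : α)
    (hab : a ⊓ bᶜ ≠ ⊥) (n : ℕ) : rsSeq f b a n ⊓ bᶜ ≠ ⊥ := by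
  induction n with
  | zero => exact hab
  | succ n ih =>
    rw [rsSeq]
    split
    · next h =>
      obtain ⟨hx, hnle⟩ := h.choose_spec
      intro hbot
      apply hnle
      have : (rsSeq f b a n ⊓ bᶜ) ⊓ (h.choose)ᶜ = ⊥ := by
        rw [← hbot]; ac_rfl
      rwa [← sdiff_eq, sdiff_eq_bot_iff] at this
    · exact ih

theorem rsSeq_key [BooleanAlgebra α] (f : ℕ → Set α) (b a : α) (n : ℕ) (m : α)
    (hm : IsGLB (f n) m) :
    rsSeq f b a (n + 1) ⊓ bᶜ ≤ m ∨ ∃ x ∈ f n, rsSeq f b a (n + 1) ≤ xᶜ := by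
  rw [rsSeq]
  split
  · next h =>
    exact Or.inr ⟨h.choose, h.choose_spec.1, inf_le_right⟩
  · next h =>
    push_neg at h
    exact Or.inl (hm.2 fun x hx => h x hx)

/-- Rasiowa–Sikorski lemma: for a countable family `S` of subsets of a Boolean
algebra and `a ≰ b`, there is a Q-filter for `S` containing `a` but not `b`. -/
theorem rasiowa_sikorski [BooleanAlgebra α] (S : Set (Set α)) (hS : S.Countable)
    (a b : α) (hab : ¬ a ≤ b) :
    ∃ F : Set α, IsQFilter S F ∧ a ∈ F ∧ b ∉ F := by
  -- get an enumeration covering S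
  obtain ⟨f, hf⟩ : ∃ f : ℕ → Set α, S ⊆ Set.range f := by
    rcases S.eq_empty_or_nonempty with h | h
    · exact ⟨fun _ => ∅, by simp [h]⟩
    · obtain ⟨f, hf⟩ := hS.exists_eq_range h
      exact ⟨f, hf.le⟩
  have hab' : a ⊓ bᶜ ≠ ⊥ := by
    rw [← sdiff_eq, Ne, sdiff_eq_bot_iff]; exact hab
  set s : ℕ → α := rsSeq f b a with hs
  have hsne : ∀ n, s n ⊓ bᶜ ≠ ⊥ := rsSeq_ne_bot f b a hab'
  -- the base filter
  set F₀ : Set α := {y | ∃ n, s n ⊓ bᶜ ≤ y} with hF₀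
  have hF₀good : IsGoodFilter F₀ := by
    refine ⟨⟨⊤, 0, le_top⟩, fun x y hx hxy => ?_, fun x y hx hy => ?_⟩
    · obtain ⟨n, hn⟩ := hx; exact ⟨n, hn.trans hxy⟩
    · obtain ⟨n, hn⟩ := hx; obtain ⟨m, hm⟩ := hy
      refine ⟨max n m, le_inf (le_trans ?_ hn) (le_trans ?_ hm)⟩
      · exact inf_le_inf_right _ (rsSeq_anti f b a (le_max_left n m))
      · exact inf_le_inf_right _ (rsSeq_anti f b a (le_max_right n m))
  have hF₀bot : (⊥ : α) ∉ F₀ := by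
    rintro ⟨n, hn⟩; exact hsne n (le_bot_iff.mp hn)
  -- Zorn
  set T : Set (Set α) := {F | IsGoodFilter F ∧ (⊥ : α) ∉ F ∧ F₀ ⊆ F} with hT
  obtain ⟨F, hF₀F, hFmax⟩ : ∃ F, F₀ ⊆ F ∧ Maximal (· ∈ T) F := by
    refine zorn_subset_nonempty T ?_ F₀ ⟨hF₀good, hF₀bot, le_rfl⟩
    intro c hcT hchain hcne
    obtain ⟨G₀, hG₀⟩ := hcne
    refine ⟨⋃₀ c, ⟨⟨?_, ?_, ?_⟩, ?_, ?_⟩, fun s hs => Set.subset_sUnion_of_mem hs⟩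
    · obtain ⟨x, hx⟩ := (hcT hG₀).1.1
      exact ⟨x, G₀, hG₀, hx⟩
    · rintro x y ⟨G, hG, hxG⟩ hxy
      exact ⟨G, hG, (hcT hG).1.2.1 x y hxG hxy⟩
    · rintro x y ⟨G, hG, hxG⟩ ⟨H, hH, hyH⟩
      rcases hchain.total hG hH with h | h
      · exact ⟨H, hH, (hcT hH).1.2.2 x y (h hxG) hyH⟩
      · exact ⟨G, hG, (hcT hG).1.2.2 x y hxG (h hyH)⟩
    · rintro ⟨G, hG, hbG⟩; exact (hcT hG).2.1 hbG
    · exact (hcT hG₀).2.2.trans (Set.subset_sUnion_of_mem hG₀)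
  obtain ⟨⟨hFne, hFup, hFinf⟩, hFbot, hF₀F'⟩ := hFmax.prop
  -- F is an ultrafilter: complements
  have hcompl : ∀ x : α, x ∉ F → xᶜ ∈ F := by
    intro x hx
    by_contra hxc
    set F' : Set α := {y | ∃ g ∈ F, g ⊓ x ≤ y} with hF'
    have hFF' : F ⊆ F' := fun y hy => ⟨y, hy, inf_le_left⟩
    have hxF' : x ∈ F' := by
      obtain ⟨g, hg⟩ := hFne; exact ⟨g, hg, inf_le_right⟩
    have hbotF' : (⊥ : α) ∉ F' := by
      rintro ⟨g, hg, hgx⟩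
      have : g ≤ xᶜ := by
        exact le_compl_iff_disjoint_right.mpr (disjoint_iff.mpr (le_bot_iff.mp hgx))
      exact hxc (hFup g xᶜ hg this)
    have hF'T : F' ∈ T := by
      refine ⟨⟨hFne.mono hFF', ?_, ?_⟩, hbotF', hF₀F'.trans hFF'⟩
      · rintro y z ⟨g, hg, hgy⟩ hyz; exact ⟨g, hg, hgy.trans hyz⟩
      · rintro y z ⟨g, hg, hgy⟩ ⟨h, hh, hhz⟩
        refine ⟨g ⊓ h, hFinf g h hg hh, ?_⟩
        calc (g ⊓ h) ⊓ x ≤ (g ⊓ x) ⊓ (h ⊓ x) := by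
              refine le_inf (inf_le_inf_right x inf_le_left) (inf_le_inf_right x inf_le_right)
          _ ≤ y ⊓ z := inf_le_inf hgy hhz
    have hEq : F = F' := hFmax.eq_of_le hF'T hFF'
    exact hx (hEq.symm ▸ hxF')
  have hnotboth : ∀ x : α, x ∈ F → xᶜ ∈ F → False := by
    intro x h1 h2
    have := hFinf x xᶜ h1 h2
    rw [inf_compl_eq_bot] at this
    exact hFbot this
  refine ⟨F, ⟨⟨⟨hFne, hFup, hFinf⟩, hFbot, ?_⟩, ?_⟩, ?_, ?_⟩
  · -- prime
    intro x y hxy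
    by_contra hc
    push_neg at hc
    have hx := hcompl x hc.1
    have hy := hcompl y hc.2
    have := hFinf _ _ hxy (hFinf _ _ hx hy)
    rw [← compl_sup, inf_compl_eq_bot] at this
    exact hFbot this
  · -- Q-filter condition
    intro X hX m hm hXF
    obtain ⟨n, rfl⟩ := hf hX
    rcases rsSeq_key f b a n m hm with h | ⟨x, hx, hxle⟩
    · exact hF₀F ⟨n + 1, h⟩
    · have hxc : xᶜ ∈ F := hF₀F ⟨n + 1, inf_le_left.trans hxle⟩
      exact absurd (hnotboth x (hXF hx) hxc) (not_false)
  · exact hF₀F ⟨0, inf_le_left⟩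
  · intro hb
    exact hnotboth bᶜ (hF₀F ⟨0, inf_le_right⟩) (by rwa [compl_compl])
end

section
/- Let A be a Boolean algebra, S a countable family of subsets of A, Q_S(A) the set of all Q-filters of A for S, and define f : A → 𝒫(Q_S(A)) by f(x) = {F ∈ Q_S(A) | x ∈ F}. Then f is injective, f(x ⊓ y) = f(x) ∩ f(y), f(x ⊔ y) = f(x) ∪ f(y), f(¬x) = Q_S(A) \ f(x), f(0) = ∅, f(1) = Q_S(A), and for every X ∈ S whose infimum ⨅X exists in A, f(⨅X) = ⋂_{x ∈ X} f(x). -/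
variable {α : Type*}

/-! Auxiliary development -/

structure NZ (α : Type*) [BooleanAlgebra α] where
  val : α
  ne_bot : val ≠ ⊥

instance [BooleanAlgebra α] : Preorder (NZ α) where
  le b c := c.val ≤ b.val
  le_refl _ := le_refl _
  le_trans _ _ _ h1 h2 := le_trans h2 h1

def qCofinal [BooleanAlgebra α] (X : Set α) : Order.Cofinal (NZ α) where
  carrier := {b | (∀ m : α, IsGLB X m → b.1 ≤ m) ∨ ∃ x ∈ X, b.1 ≤ xᶜ}
  isCofinal := by
    intro b
    by_cases h : ∀ x ∈ X, b.1 ⊓ xᶜ = ⊥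
    · refine ⟨b, Or.inl fun m hm => hm.2 fun x hx => ?_, le_rfl⟩
      have hb := h x hx
      rwa [← sdiff_eq, sdiff_eq_bot_iff] at hb
    · push_neg at h
      obtain ⟨x, hx, hne⟩ := h
      exact ⟨⟨b.1 ⊓ xᶜ, hne⟩, Or.inr ⟨x, hx, inf_le_right⟩, inf_le_left⟩

theorem exists_qfilter [BooleanAlgebra α] {S : Set (Set α)} (hS : S.Countable)
    {a : α} (ha : a ≠ ⊥) : ∃ F : Set α, IsQFilter S F ∧ a ∈ F := by
  classical
  haveI : Encodable ↥S := hS.toEncodable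
  set 𝒟 : ↥S → Order.Cofinal (NZ α) := fun X => qCofinal (X : Set α) with h𝒟
  set I := Order.idealOfCofinals (⟨a, ha⟩ : NZ α) 𝒟 with hI
  set F₁ : Set α := {y | ∃ b : NZ α, b ∈ I ∧ b.1 ≤ y} with hF₁
  have haF₁ : a ∈ F₁ := ⟨⟨a, ha⟩, Order.mem_idealOfCofinals _ 𝒟, le_rfl⟩
  have hF₁filter : IsGoodFilter F₁ := by
    refine ⟨⟨a, haF₁⟩, fun x y ⟨b, hb, hbx⟩ hxy => ⟨b, hb, hbx.trans hxy⟩, ?_⟩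
    rintro x y ⟨b, hb, hbx⟩ ⟨c, hc, hcy⟩
    obtain ⟨d, hd, hdb, hdc⟩ := I.directed b hb c hc
    exact ⟨d, hd, le_inf ((show d.1 ≤ b.1 from hdb).trans hbx)
      ((show d.1 ≤ c.1 from hdc).trans hcy)⟩
  have hbot₁ : (⊥ : α) ∉ F₁ := by
    rintro ⟨b, hb, hbx⟩
    exact b.2 (le_bot_iff.mp hbx)
  -- Zorn
  have hzorn : ∀ c ⊆ {F : Set α | IsGoodFilter F ∧ (⊥ : α) ∉ F ∧ F₁ ⊆ F},
      IsChain (· ⊆ ·) c → c.Nonempty →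
      ∃ ub ∈ {F : Set α | IsGoodFilter F ∧ (⊥ : α) ∉ F ∧ F₁ ⊆ F}, ∀ s ∈ c, s ⊆ ub := by
    intro c hcS hchain hcne
    obtain ⟨F₀, hF₀⟩ := hcne
    refine ⟨⋃₀ c, ⟨⟨?_, ?_, ?_⟩, ?_, ?_⟩, fun s hs => Set.subset_sUnion_of_mem hs⟩
    · obtain ⟨x, hx⟩ := (hcS hF₀).1.1
      exact ⟨x, F₀, hF₀, hx⟩
    · rintro x y ⟨F, hF, hxF⟩ hxy
      exact ⟨F, hF, (hcS hF).1.2.1 x y hxF hxy⟩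
    · rintro x y ⟨F, hF, hxF⟩ ⟨G, hG, hyG⟩
      rcases hchain.total hF hG with h | h
      · exact ⟨G, hG, (hcS hG).1.2.2 x y (h hxF) hyG⟩
      · exact ⟨F, hF, (hcS hF).1.2.2 x y hxF (h hyG)⟩
    · rintro ⟨F, hF, hbF⟩
      exact (hcS hF).2.1 hbF
    · exact (hcS hF₀).2.2.trans (Set.subset_sUnion_of_mem hF₀)
  obtain ⟨M, hF₁M, hM⟩ := zorn_subset_nonempty
      {F : Set α | IsGoodFilter F ∧ (⊥ : α) ∉ F ∧ F₁ ⊆ F} hzorn F₁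
      ⟨hF₁filter, hbot₁, subset_rfl⟩
  obtain ⟨⟨hMne, hMup, hMinf⟩, hMbot, hF₁M'⟩ := hM.prop
  have htopM : (⊤ : α) ∈ M := by
    obtain ⟨x, hx⟩ := hMne
    exact hMup x ⊤ hx le_top
  -- ultrafilter property
  have hultra : ∀ c : α, c ∈ M ∨ cᶜ ∈ M := by
    intro c
    by_contra h
    push_neg at h
    obtain ⟨hc, hcc⟩ := h
    set M' : Set α := {y | ∃ b ∈ M, b ⊓ c ≤ y} with hM'
    have hMM' : M ⊆ M' := fun y hy => ⟨y, hy, inf_le_left⟩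
    have hM'mem : M' ∈ {F : Set α | IsGoodFilter F ∧ (⊥ : α) ∉ F ∧ F₁ ⊆ F} := by
      refine ⟨⟨⟨⊤, hMM' htopM⟩, ?_, ?_⟩, ?_, hF₁M'.trans hMM'⟩
      · rintro x y ⟨b, hb, hbx⟩ hxy
        exact ⟨b, hb, hbx.trans hxy⟩
      · rintro x y ⟨b, hb, hbx⟩ ⟨d, hd, hdy⟩
        refine ⟨b ⊓ d, hMinf b d hb hd, ?_⟩
        calc b ⊓ d ⊓ c ≤ (b ⊓ c) ⊓ (d ⊓ c) := by
              refine le_inf (inf_le_inf_right c inf_le_left) (inf_le_inf_right c inf_le_right)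
          _ ≤ x ⊓ y := inf_le_inf hbx hdy
      · rintro ⟨b, hb, hbbot⟩
        have : b ≤ cᶜ := by
          have h0 : b ⊓ c = ⊥ := le_bot_iff.mp hbbot
          rwa [← sdiff_eq_bot_iff, sdiff_eq, compl_compl]
        exact hcc (hMup b cᶜ hb this)
    have := hM.eq_of_subset hM'mem hMM'
    exact hc (this ▸ (⟨⊤, htopM, by simp⟩ : c ∈ M'))
  have hMprime : IsPrimeFilter M := by
    refine ⟨⟨hMne, hMup, hMinf⟩, hMbot, ?_⟩
    intro x y hxy
    by_contra h
    push_neg at h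
    obtain ⟨hx, hy⟩ := h
    have hxc : xᶜ ∈ M := (hultra x).resolve_left hx
    have hyc : yᶜ ∈ M := (hultra y).resolve_left hy
    have : (x ⊔ y) ⊓ (xᶜ ⊓ yᶜ) ∈ M := hMinf _ _ hxy (hMinf _ _ hxc hyc)
    rw [← compl_sup, inf_compl_eq_bot] at this
    exact hMbot this
  refine ⟨M, ⟨hMprime, ?_⟩, hF₁M' haF₁⟩
  intro X hX m hm hXM
  obtain ⟨b, hbD, hbI⟩ := Order.cofinal_meets_idealOfCofinals (⟨a, ha⟩ : NZ α) 𝒟 ⟨X, hX⟩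
  have hbF₁ : b.1 ∈ F₁ := ⟨b, hbI, le_rfl⟩
  rcases hbD with hb1 | ⟨x, hx, hble⟩
  · exact hMup b.1 m (hF₁M' hbF₁) (hb1 m hm)
  · exfalso
    have hxM : x ∈ M := hXM hx
    have : b.1 ⊓ x ∈ M := hMinf _ _ (hF₁M' hbF₁) hxM
    have hb0 : b.1 ⊓ x ≤ ⊥ := by
      calc b.1 ⊓ x ≤ xᶜ ⊓ x := inf_le_inf_right x hble
        _ = ⊥ := compl_inf_eq_bot
    exact hMbot (hMup _ ⊥ this hb0)


theorem fset_mono_aux [BooleanAlgebra α] {S : Set (Set α)} (hS : S.Countable)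
    {x y : α} (h : fset S x ⊆ fset S y) : x ≤ y := by
  by_contra hxy
  have hne : x ⊓ yᶜ ≠ ⊥ := by
    rw [← sdiff_eq, Ne, sdiff_eq_bot_iff]
    exact hxy
  obtain ⟨F, hF, haF⟩ := exists_qfilter hS hne
  obtain ⟨⟨⟨hne', hup, hinf⟩, hbot, hprime⟩, hq⟩ := hF
  have hxF : x ∈ F := hup _ _ haF inf_le_left
  have hycF : yᶜ ∈ F := hup _ _ haF inf_le_right
  have hyF : y ∈ F := h (show (⟨F, ⟨⟨⟨hne', hup, hinf⟩, hbot, hprime⟩, hq⟩⟩ : QFilt S) ∈ fset S x from hxF)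
  have : y ⊓ yᶜ ∈ F := hinf _ _ hyF hycF
  rw [inf_compl_eq_bot] at this
  exact hbot this

/-- The Stone-style embedding into the powerset of the set of Q-filters is an
injective Boolean homomorphism preserving the infima of members of `S`. -/
theorem qfilter_representation [BooleanAlgebra α] (S : Set (Set α))
    (hS : S.Countable) :
    Function.Injective (fset S) ∧
    (∀ x y : α, fset S (x ⊓ y) = fset S x ∩ fset S y) ∧
    (∀ x y : α, fset S (x ⊔ y) = fset S x ∪ fset S y) ∧
    (∀ x : α, fset S xᶜ = (fset S x)ᶜ) ∧
    fset S (⊥ : α) = ∅ ∧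
    fset S (⊤ : α) = Set.univ ∧
    (∀ X ∈ S, ∀ m : α, IsGLB X m → fset S m = ⋂ x ∈ X, fset S x) := by
  have htop : ∀ F : QFilt S, (⊤ : α) ∈ F.1 := by
    intro F
    obtain ⟨z, hz⟩ := F.2.1.1.1
    exact F.2.1.1.2.1 z ⊤ hz le_top
  have hbot : ∀ F : QFilt S, (⊥ : α) ∉ F.1 := fun F => F.2.1.2.1
  have hup : ∀ (F : QFilt S) (x y : α), x ∈ F.1 → x ≤ y → y ∈ F.1 :=
    fun F => F.2.1.1.2.1
  have hinf : ∀ (F : QFilt S) (x y : α), x ∈ F.1 → y ∈ F.1 → x ⊓ y ∈ F.1 :=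
    fun F => F.2.1.1.2.2
  have hcompl : ∀ (F : QFilt S) (x : α), xᶜ ∈ F.1 ↔ x ∉ F.1 := by
    intro F x
    constructor
    · intro hc hx
      have := hinf F _ _ hx hc
      rw [inf_compl_eq_bot] at this
      exact hbot F this
    · intro hx
      have h1 : x ⊔ xᶜ ∈ F.1 := by rw [sup_compl_eq_top]; exact htop F
      exact (F.2.1.2.2 x xᶜ h1).resolve_left hx
  refine ⟨?_, ?_, ?_, ?_, ?_, ?_, ?_⟩
  · intro x y hxy
    exact le_antisymm (fset_mono_aux hS hxy.le) (fset_mono_aux hS hxy.ge)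
  · intro x y
    ext F
    exact ⟨fun h => ⟨hup F _ _ h inf_le_left, hup F _ _ h inf_le_right⟩,
      fun ⟨h1, h2⟩ => hinf F _ _ h1 h2⟩
  · intro x y
    ext F
    exact ⟨fun h => F.2.1.2.2 x y h,
      fun h => h.elim (fun h1 => hup F _ _ h1 le_sup_left)
        (fun h2 => hup F _ _ h2 le_sup_right)⟩
  · intro x
    ext F
    exact hcompl F x
  · ext F
    simp only [fset, Set.mem_setOf_eq, Set.mem_empty_iff_false, iff_false]
    exact hbot F
  · ext F
    simp only [fset, Set.mem_setOf_eq, Set.mem_univ, iff_true]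
    exact htop F
  · intro X hX m hm
    ext F
    simp only [fset, Set.mem_setOf_eq, Set.mem_iInter]
    constructor
    · intro h x hx
      exact hup F _ _ h (hm.1 hx)
    · intro h
      exact F.2.2 X hX m hm fun x hx => h x hx
end

section
/- Let A be a Boolean algebra, S a family of subsets of A, and F a Q-filter of A for S. Then F is an ultrafilter-like prime filter in the sense that for every x ∈ A, exactly one of x ∈ F and ¬x ∈ F holds; consequently, for every subset X ⊆ A whose supremum s = ⨆X exists in A and such that the set {¬x | x ∈ X} belongs to S, one has s ∈ F if and only if there exists x ∈ X with x ∈ F. -/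
variable {α : Type*}

/-!
Primeness applied to `x ⊔ xᶜ = ⊤` and properness applied to `x ⊓ xᶜ = ⊥` make a prime filter
an ultrafilter. If `s = ⨆ X` lies in `F` but no element of `X` does, then all complements of
elements of `X` lie in `F`; their infimum is `sᶜ`, which the Q-filter condition puts in `F`,
contradicting `s ∈ F`.
-/

section

variable [BooleanAlgebra α] {F : Set α}

theorem IsLUB.isGLB_compl_image {X : Set α} {s : α} (hs : IsLUB X s) :
    IsGLB (compl '' X) sᶜ := by
  refine ⟨?_, fun b hb => ?_⟩
  · rintro _ ⟨x, hx, rfl⟩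
    exact compl_le_compl (hs.1 hx)
  · refine le_compl_comm.mp (hs.2 fun x hx => ?_)
    exact le_compl_comm.mp (hb ⟨x, hx, rfl⟩)

namespace IsGoodFilter

theorem mem_of_le (hF : IsGoodFilter F) {x y : α} (hx : x ∈ F) (hxy : x ≤ y) : y ∈ F :=
  hF.2.1 x y hx hxy

theorem top_mem (hF : IsGoodFilter F) : (⊤ : α) ∈ F :=
  let ⟨_, ha⟩ := hF.1
  hF.mem_of_le ha le_top

end IsGoodFilter

namespace IsPrimeFilter

theorem mem_or_compl_mem (hF : IsPrimeFilter F) (x : α) : x ∈ F ∨ xᶜ ∈ F :=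
  hF.2.2 x xᶜ (by rw [sup_compl_eq_top]; exact hF.1.top_mem)

theorem not_mem_and_compl_mem (hF : IsPrimeFilter F) (x : α) : ¬(x ∈ F ∧ xᶜ ∈ F) :=
  fun ⟨hx, hxc⟩ => hF.2.1 (by simpa using hF.1.2.2 x xᶜ hx hxc)

theorem xor_mem_compl (hF : IsPrimeFilter F) (x : α) : Xor (x ∈ F) (xᶜ ∈ F) :=
  (xor_iff_or_and_not_and _ _).mpr ⟨hF.mem_or_compl_mem x, hF.not_mem_and_compl_mem x⟩

end IsPrimeFilter

theorem IsQFilter.mem_iff_exists_mem_of_isLUB {S : Set (Set α)} (hF : IsQFilter S F)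
    {X : Set α} {s : α} (hs : IsLUB X s) (hS : compl '' X ∈ S) :
    s ∈ F ↔ ∃ x ∈ X, x ∈ F := by
  refine ⟨fun hsF => ?_, fun ⟨_, hx, hxF⟩ => hF.1.1.mem_of_le hxF (hs.1 hx)⟩
  by_contra! hnone
  have hcompl : compl '' X ⊆ F := by
    rintro _ ⟨x, hx, rfl⟩
    exact (hF.1.mem_or_compl_mem x).resolve_left (hnone x hx)
  exact hF.1.not_mem_and_compl_mem s ⟨hsF, hF.2 _ hS _ hs.isGLB_compl_image hcompl⟩

end

/-- A Q-filter contains exactly one of `x`, `xᶜ` for each `x`; consequently, for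
any `X` whose supremum `s` exists and with `{xᶜ | x ∈ X} ∈ S`, `s ∈ F` iff some
element of `X` is in `F`. -/
theorem qfilter_ultra_and_sup [BooleanAlgebra α] (S : Set (Set α)) (F : Set α)
    (hF : IsQFilter S F) :
    (∀ x : α, Xor' (x ∈ F) (xᶜ ∈ F)) ∧
    (∀ X : Set α, ∀ s : α, IsLUB X s → (Compl.compl '' X) ∈ S →
      (s ∈ F ↔ ∃ x ∈ X, x ∈ F)) :=
  ⟨hF.1.xor_mem_compl, fun _ _ hs hS => hF.mem_iff_exists_mem_of_isLUB hs hS⟩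
end

section
/- Let A be a modal algebra satisfying □x ⊓ □y ≤ □(x ⊓ y) for all x, y ∈ A, S a family of subsets of A, Q_S(A) the set of Q-filters of A for S, f(x) = {G ∈ Q_S(A) | x ∈ G}, and V_A(F) the upward closure under ⊆ of the family {f(x) | □x ∈ F}. Then for every F ∈ Q_S(A), the family V_A(F) is closed under binary intersections: if X ∈ V_A(F) and Y ∈ V_A(F) then X ∩ Y ∈ V_A(F). -/
variable {α : Type*}

/-- If `□x ⊓ □y ≤ □(x ⊓ y)` for all `x, y`, then the neighborhood frame
`J_S(A)` is cufi: each neighborhood family is closed under binary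
intersections. -/
theorem jsa_cufi [BooleanAlgebra α] (box : α → α)
    (hcufi : ∀ x y : α, box x ⊓ box y ≤ box (x ⊓ y)) (S : Set (Set α)) :
    ∀ F : QFilt S, ∀ X Y : Set (QFilt S),
      X ∈ nbhd box S F → Y ∈ nbhd box S F → X ∩ Y ∈ nbhd box S F := by
  rintro F X Y ⟨a, haF, haX⟩ ⟨b, hbF, hbY⟩
  obtain ⟨⟨⟨_, hup, hmeet⟩, _, _⟩, _⟩ := F.2
  refine ⟨a ⊓ b, hup _ _ (hmeet _ _ haF hbF) (hcufi a b), ?_⟩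
  intro G hG
  obtain ⟨⟨⟨_, gup, _⟩, _, _⟩, _⟩ := G.2
  exact ⟨haX (gup _ _ hG inf_le_left), hbY (gup _ _ hG inf_le_right)⟩
end

section
/- Let A be a monotonic modal algebra (□(x ⊓ y) ≤ □x ⊓ □y for all x, y), S a countable family of subsets of A, Q_S(A) the set of Q-filters of A for S, f(x) = {G ∈ Q_S(A) | x ∈ G}, and V_A(F) the upward closure under ⊆ of {f(y) | □y ∈ F}. If F ∈ Q_S(A) and x ∈ A satisfy □x ∉ F, then f(x) ∉ V_A(F); equivalently, for every y ∈ A with □y ∈ F one has f(y) ⊄ f(x). -/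
variable {α : Type*}

section aux
variable [BooleanAlgebra α]

theorem exists_prime_extension {G0 : Set α} (hG0 : IsGoodFilter G0) (hbot : (⊥:α) ∉ G0) :
    ∃ G : Set α, IsPrimeFilter G ∧ G0 ⊆ G := by
  classical
  set P : Set (Set α) := {G | IsGoodFilter G ∧ (⊥:α) ∉ G} with hP
  have hchainub : ∀ c ⊆ P, IsChain (· ⊆ ·) c → c.Nonempty → ∃ ub ∈ P, ∀ s ∈ c, s ⊆ ub := by
    intro c hcP hchain hcne
    refine ⟨⋃₀ c, ⟨⟨?_, ?_, ?_⟩, ?_⟩, fun s hs => Set.subset_sUnion_of_mem hs⟩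
    · obtain ⟨G, hG⟩ := hcne
      obtain ⟨z, hz⟩ := (hcP hG).1.1
      exact ⟨z, G, hG, hz⟩
    · rintro a b ⟨G, hG, haG⟩ hab
      exact ⟨G, hG, (hcP hG).1.2.1 a b haG hab⟩
    · rintro a b ⟨G, hG, haG⟩ ⟨G', hG', hbG⟩
      rcases hchain.total hG hG' with h | h
      · exact ⟨G', hG', (hcP hG').1.2.2 a b (h haG) hbG⟩
      · exact ⟨G, hG, (hcP hG).1.2.2 a b haG (h hbG)⟩
    · rintro ⟨G, hG, hbG⟩
      exact (hcP hG).2 hbG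
  obtain ⟨M, hM0, hMmax⟩ := zorn_subset_nonempty P hchainub G0 ⟨hG0, hbot⟩
  obtain ⟨⟨hne, hup, hmeet⟩, hMb⟩ := hMmax.prop
  -- helper: x ∉ M → ∃ m ∈ M, m ⊓ x ≤ ⊥
  have key : ∀ x : α, x ∉ M → ∃ m ∈ M, m ⊓ x ≤ ⊥ := by
    intro x hxM
    by_contra h
    push_neg at h
    set Mx : Set α := {z | ∃ m ∈ M, m ⊓ x ≤ z} with hMx
    have hMsub : M ⊆ Mx := fun m hm => ⟨m, hm, inf_le_left⟩
    have hxMx : x ∈ Mx := ⟨hne.choose, hne.choose_spec, inf_le_right⟩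
    have hMxP : Mx ∈ P := by
      refine ⟨⟨⟨x, hxMx⟩, ?_, ?_⟩, ?_⟩
      · rintro a b ⟨m, hm, hma⟩ hab; exact ⟨m, hm, hma.trans hab⟩
      · rintro a b ⟨m, hm, hma⟩ ⟨m', hm', hmb⟩
        exact ⟨m ⊓ m', hmeet _ _ hm hm', by
          calc m ⊓ m' ⊓ x ≤ (m ⊓ x) ⊓ (m' ⊓ x) := by
                refine le_inf (inf_le_inf_right x inf_le_left) (inf_le_inf_right x inf_le_right)
            _ ≤ a ⊓ b := inf_le_inf hma hmb⟩
      · rintro ⟨m, hm, hmx⟩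
        exact h m hm hmx
    exact hxM (hMmax.2 hMxP hMsub hxMx)
  refine ⟨M, ⟨⟨hne, hup, hmeet⟩, hMb, ?_⟩, hM0⟩
  intro a b hab
  by_contra hcon
  push_neg at hcon
  obtain ⟨m, hm, hma⟩ := key a hcon.1
  obtain ⟨m', hm', hmb⟩ := key b hcon.2
  apply hMb
  have : m ⊓ m' ⊓ (a ⊔ b) ∈ M := hmeet _ _ (hmeet _ _ hm hm') hab
  have hle : m ⊓ m' ⊓ (a ⊔ b) ≤ ⊥ := by
    rw [inf_sup_left]
    refine sup_le ?_ ?_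
    · exact le_trans (inf_le_inf_right a inf_le_left) hma
    · exact le_trans (inf_le_inf_right b inf_le_right) hmb
  exact hup _ _ this hle
end aux

section aux2
variable [BooleanAlgebra α]

theorem step_exists (X : Set α) (b : α) (hb : b ≠ ⊥) :
    ∃ b' : α, b' ≤ b ∧ b' ≠ ⊥ ∧ ∀ m : α, IsGLB X m → (b' ≤ m ∨ ∃ c ∈ X, b' ≤ cᶜ) := by
  by_cases hg : ∃ m, IsGLB X m
  · obtain ⟨m, hm⟩ := hg
    by_cases hbm : b ≤ m
    · exact ⟨b, le_rfl, hb, fun m' hm' => Or.inl (by rwa [hm.unique hm'] at hbm)⟩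
    · have hne : b ⊓ mᶜ ≠ ⊥ := fun h => hbm (by rwa [← sdiff_eq, sdiff_eq_bot_iff] at h)
      have hc : ∃ c ∈ X, b ⊓ mᶜ ⊓ cᶜ ≠ ⊥ := by
        by_contra h
        push_neg at h
        apply hne
        have hlb : b ⊓ mᶜ ∈ lowerBounds X := by
          intro c hcX
          have := h c hcX
          rwa [← sdiff_eq, sdiff_eq_bot_iff] at this
        have : b ⊓ mᶜ ≤ m ⊓ mᶜ := le_inf (hm.2 hlb) inf_le_right
        simpa using this
      obtain ⟨c, hcX, hcne⟩ := hc
      exact ⟨b ⊓ mᶜ ⊓ cᶜ, le_trans inf_le_left inf_le_left, hcne,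
        fun m' hm' => Or.inr ⟨c, hcX, inf_le_right⟩⟩
  · exact ⟨b, le_rfl, hb, fun m hm => absurd ⟨m, hm⟩ hg⟩

theorem exists_qfilter_s9 (S : Set (Set α)) (hS : S.Countable) {x y : α} (hxy : ¬ y ≤ x) :
    ∃ G : Set α, IsQFilter S G ∧ y ∈ G ∧ x ∉ G := by
  classical
  obtain ⟨f, hf⟩ : ∃ f : ℕ → Set α, ∀ X ∈ S, ∃ n, f n = X := by
    rcases S.eq_empty_or_nonempty with h | h
    · exact ⟨fun _ => ∅, by simp [h]⟩
    · obtain ⟨f, hfr⟩ := Set.Countable.exists_eq_range hS h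
      refine ⟨f, fun X hX => ?_⟩
      rw [hfr] at hX
      obtain ⟨n, hn⟩ := hX
      exact ⟨n, hn⟩
  have h0 : y ⊓ xᶜ ≠ ⊥ := fun h => hxy (by rwa [← sdiff_eq, sdiff_eq_bot_iff] at h)
  let a : ℕ → {b : α // b ≠ ⊥} := fun n => Nat.rec ⟨y ⊓ xᶜ, h0⟩
    (fun n b => ⟨(step_exists (f n) b.1 b.2).choose,
      (step_exists (f n) b.1 b.2).choose_spec.2.1⟩) n
  have ha_succ : ∀ n, (a (n+1)).1 = (step_exists (f n) (a n).1 (a n).2).choose :=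
    fun n => rfl
  have hdec : ∀ n, (a (n+1)).1 ≤ (a n).1 :=
    fun n => (step_exists (f n) (a n).1 (a n).2).choose_spec.1
  have hanti : Antitone (fun n => (a n).1) := antitone_nat_of_succ_le hdec
  set G0 : Set α := {z | ∃ n, (a n).1 ≤ z} with hG0def
  have hgood : IsGoodFilter G0 := by
    refine ⟨⟨(a 0).1, 0, le_rfl⟩, ?_, ?_⟩
    · rintro z w ⟨n, hn⟩ hzw
      exact ⟨n, hn.trans hzw⟩
    · rintro z w ⟨n, hn⟩ ⟨m, hm⟩
      exact ⟨max n m, le_inf ((hanti (le_max_left n m)).trans hn)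
        ((hanti (le_max_right n m)).trans hm)⟩
  have hbot : (⊥:α) ∉ G0 := by
    rintro ⟨n, hn⟩
    exact (a n).2 (le_bot_iff.mp hn)
  obtain ⟨G, hGp, hG0G⟩ := exists_prime_extension hgood hbot
  have hmemG : ∀ n, (a n).1 ∈ G := fun n => hG0G ⟨n, le_rfl⟩
  have ha0 : (a 0).1 = y ⊓ xᶜ := rfl
  refine ⟨G, ⟨hGp, ?_⟩, ?_, ?_⟩
  · intro X hX m hm hXG
    obtain ⟨n, rfl⟩ := hf X hX
    rcases (step_exists (f n) (a n).1 (a n).2).choose_spec.2.2 m hm with h | ⟨c, hcX, hcc⟩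
    · exact hGp.1.2.1 _ _ (ha_succ n ▸ hmemG (n+1)) h
    · exfalso
      have hcG : c ∈ G := hXG hcX
      have hccG : cᶜ ∈ G := hGp.1.2.1 _ _ (ha_succ n ▸ hmemG (n+1)) hcc
      have : c ⊓ cᶜ ∈ G := hGp.1.2.2 _ _ hcG hccG
      rw [inf_compl_eq_bot] at this
      exact hGp.2.1 this
  · exact hGp.1.2.1 _ _ (ha0 ▸ hmemG 0) inf_le_left
  · intro hxG
    have hxc : xᶜ ∈ G := hGp.1.2.1 _ _ (ha0 ▸ hmemG 0) inf_le_right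
    have : x ⊓ xᶜ ∈ G := hGp.1.2.2 _ _ hxG hxc
    rw [inf_compl_eq_bot] at this
    exact hGp.2.1 this

end aux2


/-- In the monotonic case, if `□x ∉ F` then `f x` is not a neighborhood of `F`
in `J_S(A)`; equivalently no `f y` with `□y ∈ F` is included in `f x`. -/

theorem jsa_box_reflect [BooleanAlgebra α] (box : α → α)
    (hmono : ∀ x y : α, box (x ⊓ y) ≤ box x ⊓ box y)
    (S : Set (Set α)) (hS : S.Countable)
    (F : QFilt S) (x : α) (hx : box x ∉ F.1) :
    fset S x ∉ nbhd box S F ∧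
    ∀ y : α, box y ∈ F.1 → ¬ fset S y ⊆ fset S x := by
  have key : ∀ y : α, box y ∈ F.1 → ¬ fset S y ⊆ fset S x := by
    intro y hy hsub
    have hyx : y ≤ x := by
      by_contra hnyx
      obtain ⟨G, hG, hyG, hxG⟩ := exists_qfilter_s9 S hS hnyx
      have hmem : (⟨G, hG⟩ : QFilt S) ∈ fset S y := hyG
      exact hxG (hsub hmem)
    have hbb : box y ≤ box x := by
      have h1 : y ⊓ x = y := inf_eq_left.mpr hyx
      calc box y = box (y ⊓ x) := by rw [h1]
        _ ≤ box y ⊓ box x := hmono y x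
        _ ≤ box x := inf_le_right
    exact hx (F.2.1.1.2.1 _ _ hy hbb)
  refine ⟨?_, key⟩
  rintro ⟨y, hy, hsub⟩
  exact key y hy hsub
end

section
/- Let A be a modal algebra satisfying □x ⊓ □y ≤ □(x ⊓ y) for all x, y ∈ A, S a family of subsets of A, Q_S(A) the set of Q-filters of A for S, f(x) = {G ∈ Q_S(A) | x ∈ G}, and define V̄_A(F) = {f(x) | □x ∈ F}. Then for every F ∈ Q_S(A), the family V̄_A(F) is closed under binary intersections: if X, Y ∈ V̄_A(F) then X ∩ Y ∈ V̄_A(F). -/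
variable {α : Type*}

/-- If `□x ⊓ □y ≤ □(x ⊓ y)` for all `x, y`, then the neighborhood frame
`J̄_S(A)` (no upward closure) is cufi. -/
theorem jbar_cufi [BooleanAlgebra α] (box : α → α)
    (hcufi : ∀ x y : α, box x ⊓ box y ≤ box (x ⊓ y)) (S : Set (Set α)) :
    ∀ F : QFilt S, ∀ X Y : Set (QFilt S),
      X ∈ nbhdBar box S F → Y ∈ nbhdBar box S F → X ∩ Y ∈ nbhdBar box S F := by
  rintro F X Y ⟨x, hx, rfl⟩ ⟨y, hy, rfl⟩
  refine ⟨x ⊓ y, ?_, ?_⟩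
  · obtain ⟨⟨⟨_, hup, hmeet⟩, _, _⟩, _⟩ := F.2
    exact hup _ _ (hmeet _ _ hx hy) (hcufi x y)
  · ext G
    obtain ⟨⟨⟨_, hup, hmeet⟩, _, _⟩, _⟩ := G.2
    constructor
    · intro h
      exact ⟨hup _ _ h inf_le_left, hup _ _ h inf_le_right⟩
    · rintro ⟨h1, h2⟩
      exact hmeet _ _ h1 h2
end

section
/- Let A be a modal algebra satisfying □1 = 1, □(x ⊓ y) ≤ □x ⊓ □y, and □x ⊓ □y ≤ □(x ⊓ y) for all x, y (i.e., a normal modal algebra), and let S be a countable family of subsets of A. Let Q_S(A) be the set of Q-filters of A for S and let V_A(F) be the upward closure under ⊆ of {f(y) | □y ∈ F}, where f(x) = {G ∈ Q_S(A) | x ∈ G}. Then the neighborhood frame (Q_S(A), V_A) is simultaneously monotonic (each V_A(F) is upward closed under ⊆), topped (Q_S(A) ∈ V_A(F) for all F), and cufi (each V_A(F) is closed under binary intersections). -/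
variable {α : Type*}

/-- For a normal modal algebra, the neighborhood frame `J_S(A)` is
simultaneously monotonic, topped and cufi. -/
theorem jsa_normal [BooleanAlgebra α] (box : α → α)
    (htop : box ⊤ = ⊤)
    (hmono : ∀ x y : α, box (x ⊓ y) ≤ box x ⊓ box y)
    (hcufi : ∀ x y : α, box x ⊓ box y ≤ box (x ⊓ y))
    (S : Set (Set α)) (hS : S.Countable) :
    (∀ F : QFilt S, ∀ X Y : Set (QFilt S),
      X ∈ nbhd box S F → X ⊆ Y → Y ∈ nbhd box S F) ∧
    (∀ F : QFilt S, (Set.univ : Set (QFilt S)) ∈ nbhd box S F) ∧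
    (∀ F : QFilt S, ∀ X Y : Set (QFilt S),
      X ∈ nbhd box S F → Y ∈ nbhd box S F → X ∩ Y ∈ nbhd box S F) := by
  refine ⟨?_, ?_, ?_⟩
  · rintro F X Y ⟨y, hy, hsub⟩ hXY
    exact ⟨y, hy, hsub.trans hXY⟩
  · intro F
    obtain ⟨⟨⟨⟨a, ha⟩, hup, hmeet⟩, _, _⟩, _⟩ := F.2
    refine ⟨⊤, ?_, fun _ _ => Set.mem_univ _⟩
    rw [htop]; exact hup a ⊤ ha le_top
  · rintro F X Y ⟨y1, hy1, hs1⟩ ⟨y2, hy2, hs2⟩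
    obtain ⟨⟨⟨_, hup, hmeet⟩, _, _⟩, _⟩ := F.2
    refine ⟨y1 ⊓ y2, hup _ _ (hmeet _ _ hy1 hy2) (hcufi y1 y2), ?_⟩
    intro G hG
    obtain ⟨⟨⟨_, hupG, hmeetG⟩, _, _⟩, _⟩ := G.2
    exact ⟨hs1 (hupG _ _ hG inf_le_left), hs2 (hupG _ _ hG inf_le_right)⟩
end
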